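/- Soundness of simplification rule S3 (degree-3 vertex with two pendant neighbours): let a be a vertex of degree 3 with neighbours d, c, c', where c and c' each have degree 1. Then there is a maximum induced matching of G containing the edge {a, c}; consequently the maximum induced matching size of G equals 1 plus the maximum induced matching size of G with vertices a, c, c', d removed. -/

import Mathlib

/-! Every edge meeting `S = {a, c, c', d}` has an endpoint in the clique `{a, d}`, so an induced
matching has at most one edge meeting `S`; and `N(a) ∪ N(c) ⊆ S`, so the edge `ac` is compatible
with every edge avoiding `S`. Trading the edge of a maximum induced matching that meets `S` for
`ac` gives a maximum induced matching through `ac` whose other edges form an induced matching of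
`G - S`; conversely `ac` extends every induced matching of `G - S`. -/

open SimpleGraph

/-- A set `M` of edges of `G` is an induced matching: all elements are edges of `G`,
and any two distinct edges of `M` neither share an endpoint nor have adjacent endpoints;
equivalently every vertex of the subgraph induced by the endpoints of `M` has degree 1. -/
def IsInducedMatching {V : Type*} (G : SimpleGraph V) (M : Set (Sym2 V)) : Prop :=
  M ⊆ G.edgeSet ∧
    ∀ e ∈ M, ∀ f ∈ M, e ≠ f → ∀ u ∈ e, ∀ v ∈ f, u ≠ v ∧ ¬ G.Adj u v

/-- The maximum cardinality of an induced matching of `G`. -/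
noncomputable def maxIM {V : Type*} (G : SimpleGraph V) : ℕ :=
  sSup {k | ∃ M : Finset (Sym2 V), IsInducedMatching G (↑M) ∧ M.card = k}

namespace IsInducedMatching

variable {V W : Type*} {G : SimpleGraph V}

theorem mono {M N : Set (Sym2 V)} (hM : IsInducedMatching G M) (hNM : N ⊆ M) :
    IsInducedMatching G N :=
  ⟨hNM.trans hM.1, fun e he f hf => hM.2 e (hNM he) f (hNM hf)⟩

theorem image_iff {H : SimpleGraph W} (φ : H ↪g G) {M : Set (Sym2 W)} :
    IsInducedMatching G (Sym2.map φ '' M) ↔ IsInducedMatching H M := by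
  have hinj : Function.Injective (Sym2.map φ) := Sym2.map.injective φ.injective
  constructor
  · rintro ⟨hsub, hsep⟩
    refine ⟨fun e he => φ.map_mem_edgeSet_iff.1 (hsub ⟨e, he, rfl⟩), ?_⟩
    intro e he f hf hef u hu v hv
    have := hsep _ ⟨e, he, rfl⟩ _ ⟨f, hf, rfl⟩ (hinj.ne hef) (φ u) (Sym2.mem_map.2 ⟨u, hu, rfl⟩)
      (φ v) (Sym2.mem_map.2 ⟨v, hv, rfl⟩)
    exact ⟨fun h => this.1 (congrArg φ h), fun h => this.2 (φ.map_adj_iff.2 h)⟩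
  · rintro ⟨hsub, hsep⟩
    refine ⟨?_, ?_⟩
    · rintro _ ⟨e, he, rfl⟩
      exact φ.map_mem_edgeSet_iff.2 (hsub he)
    · rintro _ ⟨e, he, rfl⟩ _ ⟨f, hf, rfl⟩ hef _ hφu _ hφv
      obtain ⟨u, hu, rfl⟩ := Sym2.mem_map.1 hφu
      obtain ⟨v, hv, rfl⟩ := Sym2.mem_map.1 hφv
      have := hsep e he f hf (fun h => hef (h ▸ rfl)) u hu v hv
      exact ⟨φ.injective.ne this.1, fun h => this.2 (φ.map_adj_iff.1 h)⟩

end IsInducedMatching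

section maxIM

variable {V : Type*} [Finite V] {G : SimpleGraph V}

theorem bddAbove_card_isInducedMatching (G : SimpleGraph V) :
    BddAbove {k | ∃ M : Finset (Sym2 V), IsInducedMatching G ↑M ∧ M.card = k} := by
  have := Fintype.ofFinite V
  refine ⟨Fintype.card (Sym2 V), ?_⟩
  rintro k ⟨M, -, rfl⟩
  exact M.card_le_univ

theorem IsInducedMatching.card_le_maxIM {M : Finset (Sym2 V)} (hM : IsInducedMatching G ↑M) :
    M.card ≤ maxIM G :=
  le_csSup (bddAbove_card_isInducedMatching G) ⟨M, hM, rfl⟩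

theorem exists_isInducedMatching_card_eq_maxIM (G : SimpleGraph V) :
    ∃ M : Finset (Sym2 V), IsInducedMatching G ↑M ∧ M.card = maxIM G := by
  refine Nat.sSup_mem ?_ (bddAbove_card_isInducedMatching G)
  exact ⟨0, ∅, ⟨by simp, by simp⟩, rfl⟩

theorem IsInducedMatching.card_le_maxIM_induce {s : Set V} {M : Finset (Sym2 V)}
    (hM : IsInducedMatching G ↑M) (hMs : ∀ e ∈ M, ∀ v ∈ e, v ∈ s) :
    M.card ≤ maxIM (G.induce s) := by
  classical
  have hrange : ↑M ⊆ Set.range (Sym2.map (Embedding.induce (G := G) s)) := fun e he =>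
    ⟨e.pmap Subtype.mk (hMs e he), Sym2.pmap_subtype_map_subtypeVal e _⟩
  obtain ⟨M', -, rfl⟩ := Finset.subset_set_image_iff.1 (Set.image_univ.symm ▸ hrange)
  rw [Finset.coe_image, IsInducedMatching.image_iff] at hM
  exact (Finset.card_image_le).trans hM.card_le_maxIM

theorem exists_isInducedMatching_card_eq_maxIM_induce (G : SimpleGraph V) (s : Set V) :
    ∃ M : Finset (Sym2 V), IsInducedMatching G ↑M ∧ (∀ e ∈ M, ∀ v ∈ e, v ∈ s) ∧
      M.card = maxIM (G.induce s) := by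
  classical
  obtain ⟨M, hM, hcard⟩ := exists_isInducedMatching_card_eq_maxIM (G.induce s)
  refine ⟨M.image (Sym2.map (Embedding.induce (G := G) s)), ?_, ?_, ?_⟩
  · rwa [Finset.coe_image, IsInducedMatching.image_iff]
  · simp only [Finset.mem_image]
    rintro _ ⟨e, -, rfl⟩ _ hv
    obtain ⟨v, -, rfl⟩ := Sym2.mem_map.1 hv
    exact v.2
  · rw [Finset.card_image_of_injective _ (Sym2.map.injective (Embedding.induce s).injective),
      hcard]

end maxIM

section Reduction

variable {V : Type*} {G : SimpleGraph V} {S K : Set V} {e : Sym2 V}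

theorem exists_mem_of_mem_edgeSet_of_mem (hSK : ∀ u ∈ S, ∀ v, G.Adj u v → u ∈ K ∨ v ∈ K)
    {f : Sym2 V} (hf : f ∈ G.edgeSet) {u : V} (hu : u ∈ f) (huS : u ∈ S) : ∃ x ∈ f, x ∈ K := by
  obtain ⟨w, rfl⟩ := Sym2.mem_iff_exists.1 hu
  rcases hSK u huS w hf with h | h
  exacts [⟨u, Sym2.mem_mk_left u w, h⟩, ⟨w, Sym2.mem_mk_right u w, h⟩]

theorem IsInducedMatching.eq_of_mem_of_mem {M : Set (Sym2 V)} (hM : IsInducedMatching G M)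
    (hK : G.IsClique K) (hSK : ∀ u ∈ S, ∀ v, G.Adj u v → u ∈ K ∨ v ∈ K)
    {f₁ f₂ : Sym2 V} (hf₁ : f₁ ∈ M) (hf₂ : f₂ ∈ M) {u₁ u₂ : V} (hu₁ : u₁ ∈ f₁) (hu₂ : u₂ ∈ f₂)
    (hu₁S : u₁ ∈ S) (hu₂S : u₂ ∈ S) : f₁ = f₂ := by
  by_contra hne
  obtain ⟨x, hx, hxK⟩ := exists_mem_of_mem_edgeSet_of_mem hSK (hM.1 hf₁) hu₁ hu₁S
  obtain ⟨y, hy, hyK⟩ := exists_mem_of_mem_edgeSet_of_mem hSK (hM.1 hf₂) hu₂ hu₂S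
  obtain ⟨hxy, hnadj⟩ := hM.2 f₁ hf₁ f₂ hf₂ hne x hx y hy
  exact hnadj (hK hxK hyK hxy)

theorem IsInducedMatching.insert {M : Set (Sym2 V)} (hM : IsInducedMatching G M)
    (he : e ∈ G.edgeSet) (heS : ∀ u ∈ e, u ∈ S ∧ G.neighborSet u ⊆ S)
    (hMS : ∀ f ∈ M, ∀ v ∈ f, v ∉ S) : IsInducedMatching G (insert e M) := by
  have hsep : ∀ f ∈ M, ∀ u ∈ e, ∀ v ∈ f, u ≠ v ∧ ¬ G.Adj u v := fun f hf u hu v hv =>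
    ⟨fun h => hMS f hf v hv (h ▸ (heS u hu).1), fun h => hMS f hf v hv ((heS u hu).2 h)⟩
  refine ⟨Set.insert_subset he hM.1, ?_⟩
  rintro f₁ (rfl | hf₁) f₂ (rfl | hf₂) hne u hu v hv
  · exact absurd rfl hne
  · exact hsep f₂ hf₂ u hu v hv
  · exact (hsep f₁ hf₁ v hv u hu).imp Ne.symm (mt G.adj_symm)
  · exact hM.2 f₁ hf₁ f₂ hf₂ hne u hu v hv

variable [Finite V]

theorem exists_isInducedMatching_card_eq_maxIM_of_mem (hK : G.IsClique K)
    (hSK : ∀ u ∈ S, ∀ v, G.Adj u v → u ∈ K ∨ v ∈ K) (he : e ∈ G.edgeSet)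
    (heS : ∀ u ∈ e, u ∈ S ∧ G.neighborSet u ⊆ S) :
    ∃ M : Finset (Sym2 V), IsInducedMatching G ↑M ∧ M.card = maxIM G ∧ e ∈ M := by
  classical
  obtain ⟨M, hM, hcard⟩ := exists_isInducedMatching_card_eq_maxIM G
  let M₀ := M.filter fun f => ¬ ∃ v ∈ f, v ∈ S
  have hM₀S : ∀ f ∈ M₀, ∀ v ∈ f, v ∉ S := fun f hf v hv hvS =>
    (Finset.mem_filter.1 hf).2 ⟨v, hv, hvS⟩
  have hN : IsInducedMatching G ↑(insert e M₀) := by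
    rw [Finset.coe_insert]
    exact (hM.mono (Finset.coe_subset.2 (Finset.filter_subset _ M))).insert he heS hM₀S
  have heM₀ : e ∉ M₀ := fun h => hM₀S e h _ e.out_fst_mem (heS _ e.out_fst_mem).1
  -- at most one edge of `M` meets `S`, and it is traded for `e`
  have hmeet : (M.filter fun f => ∃ v ∈ f, v ∈ S).card ≤ 1 := by
    refine Finset.card_le_one.2 fun f₁ h₁ f₂ h₂ => ?_
    obtain ⟨hf₁, u₁, hu₁, hu₁S⟩ := Finset.mem_filter.1 h₁
    obtain ⟨hf₂, u₂, hu₂, hu₂S⟩ := Finset.mem_filter.1 h₂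
    exact hM.eq_of_mem_of_mem hK hSK hf₁ hf₂ hu₁ hu₂ hu₁S hu₂S
  refine ⟨insert e M₀, hN, le_antisymm hN.card_le_maxIM ?_, Finset.mem_insert_self e M₀⟩
  rw [Finset.card_insert_of_notMem heM₀, ← hcard,
    ← Finset.card_filter_add_card_filter_not (fun f => ∃ v ∈ f, v ∈ S)]
  exact (Nat.add_le_add_right hmeet _).trans_eq (add_comm _ _)

theorem maxIM_eq_one_add_maxIM_induce_compl (hK : G.IsClique K)
    (hSK : ∀ u ∈ S, ∀ v, G.Adj u v → u ∈ K ∨ v ∈ K) (he : e ∈ G.edgeSet)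
    (heS : ∀ u ∈ e, u ∈ S ∧ G.neighborSet u ⊆ S) :
    maxIM G = 1 + maxIM (G.induce Sᶜ) := by
  classical
  obtain ⟨N, hN, hNcard, heN⟩ := exists_isInducedMatching_card_eq_maxIM_of_mem hK hSK he heS
  obtain ⟨P, hP, hPS, hPcard⟩ := exists_isInducedMatching_card_eq_maxIM_induce G Sᶜ
  have hu : e.out.1 ∈ e := e.out_fst_mem
  apply le_antisymm
  · have hN' : IsInducedMatching G ↑(N.erase e) :=
      hN.mono (Finset.coe_subset.2 (N.erase_subset e))
    have hN'S : ∀ f ∈ N.erase e, ∀ v ∈ f, v ∈ Sᶜ := fun f hf v hv hvS =>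
      Finset.ne_of_mem_erase hf <| hN.eq_of_mem_of_mem hK hSK (Finset.mem_of_mem_erase hf) heN
        hv hu hvS (heS _ hu).1
    have := hN'.card_le_maxIM_induce hN'S
    rw [← hNcard, ← Finset.card_erase_add_one heN]
    omega
  · have hQ : IsInducedMatching G ↑(insert e P) := by
      rw [Finset.coe_insert]
      exact hP.insert he heS hPS
    have heP : e ∉ P := fun h => hPS e h _ hu (heS _ hu).1
    have := hQ.card_le_maxIM
    rw [Finset.card_insert_of_notMem heP, hPcard] at this
    omega

end Reduction

theorem stmt_10_general {V : Type*} [Fintype V] (G : SimpleGraph V)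
    [DecidableRel G.Adj] (a c c' d : V)
    (hna : G.neighborSet a = {d, c, c'})
    (hc : G.degree c = 1) (hc' : G.degree c' = 1) :
    (∃ M : Finset (Sym2 V), IsInducedMatching G (↑M) ∧ M.card = maxIM G ∧
      s(a, c) ∈ M) ∧
    maxIM G = 1 + maxIM (G.induce ({a, c, c', d} : Set V)ᶜ) := by
  have hadj : ∀ v, G.Adj a v ↔ v = d ∨ v = c ∨ v = c' := fun v => by
    rw [← mem_neighborSet, hna]; rfl
  have hac : G.Adj a c := (hadj c).2 (by simp)
  have hpendant : ∀ v, G.Adj c v ∨ G.Adj c' v → v = a := by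
    rintro v (hv | hv)
    · exact (degree_eq_one_iff_existsUnique_adj.1 hc).unique hv hac.symm
    · exact (degree_eq_one_iff_existsUnique_adj.1 hc').unique hv ((hadj c').2 (by simp)).symm
  have hK : G.IsClique {a, d} := isClique_pair.2 fun _ => (hadj d).2 (.inl rfl)
  have hSK : ∀ u ∈ ({a, c, c', d} : Set V), ∀ v, G.Adj u v →
      u ∈ ({a, d} : Set V) ∨ v ∈ ({a, d} : Set V) := by
    rintro u (rfl | rfl | rfl | rfl) v huv
    · exact .inl (.inl rfl)
    · exact .inr (.inl (hpendant v (.inl huv)))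
    · exact .inr (.inl (hpendant v (.inr huv)))
    · exact .inl (.inr rfl)
  have heS : ∀ u ∈ s(a, c), u ∈ ({a, c, c', d} : Set V) ∧ G.neighborSet u ⊆ {a, c, c', d} := by
    intro u hu
    rcases Sym2.mem_iff.1 hu with rfl | rfl
    · simp [hna, Set.insert_subset_iff]
    · exact ⟨by simp, fun v hv => (hpendant v (.inl hv)) ▸ .inl rfl⟩
  exact ⟨exists_isInducedMatching_card_eq_maxIM_of_mem hK hSK hac heS,
    maxIM_eq_one_add_maxIM_induce_compl hK hSK hac heS⟩

/-- soundness of simplification rule S3, degree-3 vertex with two pendant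
neighbours: if `a` has degree 3 with neighbours `d`, `c`, `c'`, where `c` and `c'` have
degree 1, then some maximum induced matching contains `{a,c}`, and
`maxIM G = 1 + maxIM (G − {a,c,c',d})`. -/
theorem stmt_10 {V : Type*} [Fintype V] [DecidableEq V] (G : SimpleGraph V)
    [DecidableRel G.Adj] (a c c' d : V)
    (ha : G.degree a = 3) (hna : G.neighborSet a = {d, c, c'})
    (hc : G.degree c = 1) (hc' : G.degree c' = 1) :
    (∃ M : Finset (Sym2 V), IsInducedMatching G (↑M) ∧ M.card = maxIM G ∧
      s(a, c) ∈ M) ∧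
    maxIM G = 1 + maxIM (G.induce ({a, c, c', d} : Set V)ᶜ) :=
  stmt_10_general G a c c' d hna hc hc'
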